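/- Let G be a finite p-group of maximal class with an abelian subgroup A of index p, and let H be a proper subgroup of G with H not contained in A. Then |N_G(H) : H| = p. -/

import Mathlib

/-!
Pick `h ∈ H \ A`, so that `G = A⟨h⟩`. As `A` is abelian and normal, `a ↦ ⁅h, a⁆` is an
endomorphism of `A`; its image `R` is normal and `G/R` is generated by commuting elements, so
`G' ≤ R`. Maximal class forces `|G : G'| ≤ p²` (the lower central series drops by at least `p`
at each of its `n - 2` steps below `G'`), hence the kernel `C_A(h)` has order at most `p`.
For `a ∈ A ∩ N_G(H)` the commutator `⁅h, a⁆` lies in `A ∩ H`, so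
`|N_G(H) : H| = |A ∩ N_G(H) : A ∩ H| ≤ |C_A(h)| ≤ p`, and `|N_G(H) : H| > 1` by the
normalizer condition.
-/

open Subgroup
open scoped commutatorElement IsMulCommutative

namespace Subgroup

variable {G : Type*} [Group G]

theorem card_mul_relIndex {H K : Subgroup G} (hHK : H ≤ K) :
    Nat.card H * H.relIndex K = Nat.card K := by
  rw [← relIndex_bot_left, ← relIndex_bot_left, relIndex_mul_relIndex ⊥ H K bot_le hHK]

theorem relIndex_le_card_ker [Finite G] {f : G →* G} {S T : Subgroup G} (hTS : T ≤ S)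
    (hST : S.map f ≤ T) : T.relIndex S ≤ Nat.card f.ker := by
  have hS : Nat.card ↥(f.ker ⊓ S) * Nat.card (S.map f) = Nat.card S := by
    rw [← relIndex_ker, ← relIndex_bot_left, ← relIndex_bot_left,
      relIndex_inf_mul_relIndex, bot_inf_eq]
  have hT : 0 < Nat.card T := Nat.card_pos
  refine le_of_mul_le_mul_left ?_ hT
  calc Nat.card T * T.relIndex S = Nat.card S := card_mul_relIndex hTS
    _ = Nat.card ↥(f.ker ⊓ S) * Nat.card (S.map f) := hS.symm
    _ ≤ Nat.card f.ker * Nat.card T :=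
        Nat.mul_le_mul (card_le_of_le inf_le_left) (card_le_of_le hST)
    _ = Nat.card T * Nat.card f.ker := mul_comm _ _

theorem relIndex_eq_of_index_prime {p : ℕ} (hp : p.Prime) {A : Subgroup G} [A.Normal]
    (hA : A.index = p) {K : Subgroup G} (hK : ¬ K ≤ A) : A.relIndex K = p :=
  (hp.eq_one_or_self_of_dvd _ (hA ▸ relIndex_dvd_index_of_normal A K)).resolve_left
    fun h => hK (relIndex_eq_one.mp h)

theorem sup_eq_top_of_index_prime {p : ℕ} (hp : p.Prime) {A : Subgroup G} [A.Normal]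
    (hA : A.index = p) {K : Subgroup G} (hK : ¬ K ≤ A) : A ⊔ K = ⊤ := by
  have h := relIndex_mul_index (le_sup_left : A ≤ A ⊔ K)
  rw [relIndex_sup_left, relIndex_eq_of_index_prime hp hA hK, hA] at h
  exact index_eq_one.mp ((Nat.mul_eq_left hp.ne_zero).mp h)

theorem relIndex_subgroupOf_eq_of_index_prime {p : ℕ} (hp : p.Prime) {A : Subgroup G} [A.Normal]
    (hA : A.index = p) {H K : Subgroup G} (hHK : H ≤ K) (hH : ¬ H ≤ A) :
    (H.subgroupOf A).relIndex (K.subgroupOf A) = H.relIndex K := by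
  have hK : ¬ K ≤ A := fun h => hH (hHK.trans h)
  rw [← inf_subgroupOf_left H A, ← inf_subgroupOf_left K A, relIndex_subgroupOf inf_le_left]
  have h1 := relIndex_mul_relIndex (A ⊓ H) H K inf_le_right hHK
  have h2 := relIndex_mul_relIndex (A ⊓ H) (A ⊓ K) K (inf_le_inf_left A hHK) inf_le_right
  rw [inf_relIndex_right, relIndex_eq_of_index_prime hp hA hH] at h1
  rw [inf_relIndex_right, relIndex_eq_of_index_prime hp hA hK, ← h1, mul_comm] at h2
  exact Nat.eq_of_mul_eq_mul_left hp.pos h2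

theorem lowerCentralSeries_succ_lt [Group.IsNilpotent G] {i : ℕ}
    (hi : (⊤ : Subgroup G).lowerCentralSeries i ≠ ⊥) :
    (⊤ : Subgroup G).lowerCentralSeries (i + 1) < (⊤ : Subgroup G).lowerCentralSeries i := by
  refine lt_of_le_of_ne (lowerCentralSeries_antitone _ i.le_succ) fun hstable => hi ?_
  have hconst : ∀ j, (⊤ : Subgroup G).lowerCentralSeries (i + j) =
      (⊤ : Subgroup G).lowerCentralSeries i := by
    intro j
    induction j with
    | zero => rfl
    | succ j ih => rw [← add_assoc, lowerCentralSeries_succ, ih, ← lowerCentralSeries_succ, hstable]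
  obtain ⟨m, hm⟩ := nilpotent_iff_lowerCentralSeries.mp ‹_›
  rw [← hconst m, eq_bot_iff, ← hm]
  exact lowerCentralSeries_antitone _ (m.le_add_left i)

theorem commutator_le_of_closure_eq_top {N : Subgroup G} [N.Normal] {S : Set G}
    (hS : closure S = ⊤) (hN : ∀ x ∈ S, ∀ y ∈ S, ⁅x, y⁆ ∈ N) : _root_.commutator G ≤ N := by
  rw [← Normal.quotient_commutative_iff_commutator_le]
  have hcomm : ∀ x ∈ QuotientGroup.mk' N '' S, ∀ y ∈ QuotientGroup.mk' N '' S, x * y = y * x := by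
    rintro _ ⟨x, hx, rfl⟩ _ ⟨y, hy, rfl⟩
    rw [← commutatorElement_eq_one_iff_mul_comm, ← map_commutatorElement, QuotientGroup.mk'_apply,
      QuotientGroup.eq_one_iff]
    exact hN x hx y hy
  have hgen : closure (QuotientGroup.mk' N '' S) = ⊤ := by
    rw [← MonoidHom.map_closure, hS, map_top_of_surjective _ (QuotientGroup.mk'_surjective N)]
  have hcent := closure_le_centralizer_centralizer (QuotientGroup.mk' N '' S)
  rw [hgen] at hcent
  exact ⟨⟨fun x y => Set.centralizer_centralizer_comm_of_comm hcomm x (hcent (mem_top x)) y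
    (hcent (mem_top y))⟩⟩

variable (A : Subgroup G) [A.Normal] [IsMulCommutative A]

def commutatorMap (h : G) : A →* A :=
  (MulAut.conjNormal h).toMonoidHom * (MonoidHom.id A)⁻¹

@[simp]
theorem coe_commutatorMap (h : G) (a : A) : (A.commutatorMap h a : G) = ⁅h, (a : G)⁆ := by
  simp [commutatorMap, commutatorElement_def, mul_assoc]

theorem commutator_mem_map_range_commutatorMap {h : G} {a : G} (ha : a ∈ A) :
    ⁅h, a⁆ ∈ (A.commutatorMap h).range.map A.subtype :=
  ⟨_, ⟨⟨a, ha⟩, rfl⟩, A.coe_commutatorMap h ⟨a, ha⟩⟩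

theorem normal_map_range_commutatorMap [Finite G] {h : G} (hAh : A ⊔ zpowers h = ⊤) :
    ((A.commutatorMap h).range.map A.subtype).Normal := by
  set R := (A.commutatorMap h).range.map A.subtype
  have hRA : R ≤ A := map_subtype_le _
  rw [← normalizer_eq_top_iff, eq_top_iff, ← hAh]
  refine sup_le (fun a ha => ?_) (zpowers_le.mpr ?_)
  · refine mem_normalizer_fintype fun x hx => ?_
    rwa [setLike_mul_comm ha (hRA hx), mul_inv_cancel_right]
  · refine mem_normalizer_fintype fun x hx => ?_
    obtain ⟨_, ⟨a, rfl⟩, rfl⟩ := hx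
    have : h * ⁅h, (a : G)⁆ * h⁻¹ = ⁅h, h * a * h⁻¹⁆ := by group
    simp only [coe_subtype, coe_commutatorMap, this]
    exact A.commutator_mem_map_range_commutatorMap (Normal.conj_mem ‹_› _ a.2 h)

theorem commutator_le_map_range_commutatorMap [Finite G] {h : G} (hAh : A ⊔ zpowers h = ⊤) :
    _root_.commutator G ≤ (A.commutatorMap h).range.map A.subtype := by
  have := A.normal_map_range_commutatorMap hAh
  refine commutator_le_of_closure_eq_top (S := A ∪ {h}) ?_ ?_
  · rw [closure_union, closure_eq, ← zpowers_eq_closure, hAh]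
  rintro x (hx | rfl) y (hy | rfl)
  · rw [commutatorElement_eq_one_iff_mul_comm.mpr (setLike_mul_comm hx hy)]
    exact one_mem _
  · rw [← commutatorElement_inv]
    exact inv_mem (A.commutator_mem_map_range_commutatorMap hx)
  · exact A.commutator_mem_map_range_commutatorMap hy
  · rw [commutatorElement_self]
    exact one_mem _

theorem card_ker_commutatorMap_le [Finite G] {p : ℕ} {h : G} (hAh : A ⊔ zpowers h = ⊤)
    (hA : A.index = p) (hG : Nat.card G ≤ p ^ 2 * Nat.card (_root_.commutator G)) :
    Nat.card (A.commutatorMap h).ker ≤ p := by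
  set φ := A.commutatorMap h
  have hker : Nat.card φ.ker * Nat.card φ.range = Nat.card A := by
    rw [← index_ker, card_mul_index]
  have hR : Nat.card (_root_.commutator G) ≤ Nat.card φ.range :=
    (card_le_of_le (A.commutator_le_map_range_commutatorMap hAh)).trans_eq
      (card_map_of_injective A.subtype_injective)
  have hpos : 0 < Nat.card φ.range * p :=
    Nat.mul_pos Nat.card_pos (hA ▸ Nat.pos_of_ne_zero index_ne_zero_of_finite)
  refine le_of_mul_le_mul_right ?_ hpos
  calc Nat.card φ.ker * (Nat.card φ.range * p) = Nat.card G := by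
        rw [← mul_assoc, hker, ← hA, card_mul_index]
    _ ≤ p ^ 2 * Nat.card φ.range := hG.trans (Nat.mul_le_mul_left _ hR)
    _ = p * (Nat.card φ.range * p) := by ring

end Subgroup

namespace IsPGroup

variable {G : Type*} [Group G] [Finite G] {p : ℕ} [Fact p.Prime]

theorem dvd_relIndex_of_lt (hG : IsPGroup p G) {H K : Subgroup G} (hHK : H < K) :
    p ∣ H.relIndex K := by
  obtain ⟨k, hk⟩ := (hG.to_subgroup K).index (H.subgroupOf K)
  have hk0 : k ≠ 0 := by
    rintro rfl
    exact hHK.not_ge (relIndex_eq_one.mp hk)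
  rw [relIndex, hk]
  exact dvd_pow_self p hk0

theorem mul_card_le_card_of_lt (hG : IsPGroup p G) {H K : Subgroup G} (hHK : H < K) :
    p * Nat.card H ≤ Nat.card K := by
  rw [← card_mul_relIndex hHK.le, mul_comm]
  exact Nat.mul_le_mul_left _ (Nat.le_of_dvd (Nat.pos_of_ne_zero index_ne_zero_of_finite)
    (hG.dvd_relIndex_of_lt hHK))

theorem pow_mul_card_lowerCentralSeries_le (hG : IsPGroup p G) (i : ℕ) :
    ∀ k, (∀ j < i + k, (⊤ : Subgroup G).lowerCentralSeries j ≠ ⊥) →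
      p ^ k * Nat.card ((⊤ : Subgroup G).lowerCentralSeries (i + k)) ≤
        Nat.card ((⊤ : Subgroup G).lowerCentralSeries i)
  | 0, _ => by simp
  | k + 1, hne => by
    have := hG.isNilpotent
    calc p ^ (k + 1) * Nat.card ((⊤ : Subgroup G).lowerCentralSeries (i + k + 1))
        = p ^ k * (p * Nat.card ((⊤ : Subgroup G).lowerCentralSeries (i + k + 1))) := by ring
      _ ≤ p ^ k * Nat.card ((⊤ : Subgroup G).lowerCentralSeries (i + k)) :=
        Nat.mul_le_mul_left _ <| hG.mul_card_le_card_of_lt <|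
          lowerCentralSeries_succ_lt (hne _ (by omega))
      _ ≤ Nat.card ((⊤ : Subgroup G).lowerCentralSeries i) :=
        hG.pow_mul_card_lowerCentralSeries_le i k fun j hj => hne j (by omega)

theorem card_le_sq_mul_card_commutator (hG : IsPGroup p G) {n : ℕ} (hcard : Nat.card G = p ^ n)
    (hne : ∀ m < n - 1, (⊤ : Subgroup G).lowerCentralSeries m ≠ ⊥) :
    Nat.card G ≤ p ^ 2 * Nat.card (commutator G) := by
  have hp := (Fact.out : p.Prime).one_lt
  rcases le_or_gt n 2 with hn | hn
  · calc Nat.card G = p ^ n := hcard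
      _ ≤ p ^ 2 := Nat.pow_le_pow_right hp.le hn
      _ ≤ p ^ 2 * Nat.card (commutator G) := Nat.le_mul_of_pos_right _ Nat.card_pos
  · have hchain := hG.pow_mul_card_lowerCentralSeries_le 1 (n - 2) fun j hj => hne j (by omega)
    rw [top_lowerCentralSeries_one] at hchain
    calc Nat.card G = p ^ 2 * p ^ (n - 2) := by rw [hcard, ← pow_add]; congr 1; omega
      _ ≤ p ^ 2 * Nat.card (commutator G) :=
        Nat.mul_le_mul_left _ (le_of_mul_le_of_one_le_left hchain Nat.card_pos)

theorem normal_of_index_eq_prime (hG : IsPGroup p G) {A : Subgroup G} (hA : A.index = p) :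
    A.Normal := by
  obtain ⟨n, hn⟩ := IsPGroup.iff_card.mp hG
  have hn0 : n ≠ 0 := by
    rintro rfl
    simpa [hn, hA, (Fact.out : p.Prime).ne_one] using index_dvd_card A
  refine normal_of_index_eq_minFac_card ?_
  rw [hA, hn, Nat.pow_minFac hn0, (Fact.out : p.Prime).minFac_eq]

end IsPGroup

/-- In a finite `p`-group `G` of maximal class with an abelian subgroup `A` of index
`p`, any proper subgroup `H` not contained in `A` satisfies `|N_G(H) : H| = p`. -/
theorem stmt18 {G : Type*} [Group G] [Finite G] (p n : ℕ) (hp : p.Prime)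
    (hcard : Nat.card G = p ^ n)
    (hmax : Subgroup.lowerCentralSeries (⊤ : Subgroup G) (n - 1) = ⊥ ∧ ∀ m < n - 1, Subgroup.lowerCentralSeries (⊤ : Subgroup G) m ≠ ⊥)
    (A : Subgroup G) (hA : IsMulCommutative A) (hAi : A.index = p)
    (H : Subgroup G) (hH : H < ⊤) (hHA : ¬ H ≤ A) :
    H.relIndex (Subgroup.normalizer (H : Set G)) = p := by
  have : Fact p.Prime := ⟨hp⟩
  have hG : IsPGroup p G := IsPGroup.of_card hcard
  have := hG.isNilpotent
  have := hG.normal_of_index_eq_prime hAi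
  obtain ⟨h, hhH, hhA⟩ := SetLike.not_le_iff_exists.mp hHA
  have hAh : A ⊔ zpowers h = ⊤ := sup_eq_top_of_index_prime hp hAi (by rwa [zpowers_le])
  set N := normalizer (H : Set G)
  have hHN : H < N := Group.normalizerCondition_of_isNilpotent H hH
  have hmaps : (N.subgroupOf A).map (A.commutatorMap h) ≤ H.subgroupOf A := by
    rintro _ ⟨a, ha, rfl⟩
    rw [mem_subgroupOf, coe_commutatorMap]
    exact le_normalizer_iff_commutator_le_left.mp le_rfl (commutator_mem_commutator hhH ha)
  have hle : H.relIndex N ≤ p := by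
    rw [← relIndex_subgroupOf_eq_of_index_prime hp hAi hHN.le hHA]
    exact (relIndex_le_card_ker (subgroupOf_mono A hHN.le) hmaps).trans
      (A.card_ker_commutatorMap_le hAh hAi (hG.card_le_sq_mul_card_commutator hcard hmax.2))
  exact le_antisymm hle (Nat.le_of_dvd (Nat.pos_of_ne_zero index_ne_zero_of_finite)
    (hG.dvd_relIndex_of_lt hHN))
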